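/- Fix an integer n ≥ 0 and positive real constants S₁, S₂, and set f(r) = S₁ · P_{n+1}(r) − S₂ · P_n(r) for r > 0. If S₁/(2n+4) − S₂/(2n+2) > 0 (i.e., the limit of f at 0⁺ is positive), then f(r) > 0 for all r > 0. -/

import Mathlib

open Real Filter Set

/-- Modified Bessel function of the first kind of (integer) order `n`. -/
noncomputable def besselI (n : ℕ) (r : ℝ) : ℝ :=
  ∑' k : ℕ, (1 / (k.factorial * Real.Gamma (n + k + 1))) * (r / 2) ^ (n + 2 * k)

/-- `P n r = I_{n+1}(r) / (r * I_n(r))`. -/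
noncomputable def P (n : ℕ) (r : ℝ) : ℝ := besselI (n + 1) r / (r * besselI n r)

/-! The Turán-type inequality `(n + 1) I_{n+1}² ≤ (n + 2) I_n I_{n+2}` holds coefficientwise in the
Cauchy products of the power series in `r / 2`, by AM-GM. Dividing by `r I_n I_{n+1}` it reads
`(n + 1) P_n ≤ (n + 2) P_{n+1}`, so `S₁ P_{n+1} ≥ S₁ (n + 1) / (n + 2) · P_n > S₂ P_n`, the last
step being the hypothesis on the limit at `0⁺`. -/

open Finset
open scoped Nat

noncomputable def besselCoeff (n k : ℕ) : ℝ := ((k ! * (n + k)! : ℕ) : ℝ)⁻¹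

lemma besselCoeff_pos (n k : ℕ) : 0 < besselCoeff n k := by
  unfold besselCoeff; positivity

lemma besselCoeff_succ (n k : ℕ) : besselCoeff (n + 1) k = besselCoeff n k / (n + k + 1) := by
  rw [besselCoeff, besselCoeff, show n + 1 + k = (n + k) + 1 by omega, Nat.factorial_succ]
  push_cast
  field_simp

lemma besselI_eq_tsum (n : ℕ) (r : ℝ) :
    besselI n r = ∑' k, besselCoeff n k * (r / 2) ^ (n + 2 * k) := by
  refine tsum_congr fun k => ?_
  rw [besselCoeff, show (n : ℝ) + k + 1 = ((n + k : ℕ) : ℝ) + 1 by push_cast; ring,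
    Gamma_nat_eq_factorial]
  push_cast
  rw [one_div]

lemma summable_norm_besselCoeff_mul_pow (n : ℕ) (x : ℝ) :
    Summable fun k => ‖besselCoeff n k * x ^ (n + 2 * k)‖ := by
  refine .of_nonneg_of_le (fun _ => norm_nonneg _) (fun k => ?_)
    ((summable_pow_div_factorial (x ^ 2)).mul_left (|x| ^ n))
  have hfac : (1 : ℝ) ≤ (n + k)! := by exact_mod_cast (n + k).factorial_pos
  calc ‖besselCoeff n k * x ^ (n + 2 * k)‖
      = |x| ^ n * ((x ^ 2) ^ k / (k ! * (n + k)!)) := by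
        rw [besselCoeff, norm_mul, norm_inv, Real.norm_natCast, norm_pow, Real.norm_eq_abs,
          pow_add, pow_mul, sq_abs]
        push_cast
        ring
    _ ≤ |x| ^ n * ((x ^ 2) ^ k / k !) := by
        gcongr
        exact le_mul_of_one_le_right (by positivity) hfac

lemma besselI_pos (n : ℕ) {r : ℝ} (hr : 0 < r) : 0 < besselI n r := by
  rw [besselI_eq_tsum]
  exact (summable_norm_besselCoeff_mul_pow n _).of_norm.tsum_pos
    (fun k => by have := besselCoeff_pos n k; positivity) 0
    (by have := besselCoeff_pos n 0; positivity)

lemma hasSum_besselI_mul_besselI (a b : ℕ) (r : ℝ) :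
    HasSum (fun m => (∑ p ∈ antidiagonal m, besselCoeff a p.1 * besselCoeff b p.2) *
        (r / 2) ^ (a + b + 2 * m)) (besselI a r * besselI b r) := by
  have hf := summable_norm_besselCoeff_mul_pow a (r / 2)
  have hg := summable_norm_besselCoeff_mul_pow b (r / 2)
  have hterm (m : ℕ) : ∑ p ∈ antidiagonal m,
      besselCoeff a p.1 * (r / 2) ^ (a + 2 * p.1) * (besselCoeff b p.2 * (r / 2) ^ (b + 2 * p.2)) =
      (∑ p ∈ antidiagonal m, besselCoeff a p.1 * besselCoeff b p.2) * (r / 2) ^ (a + b + 2 * m) := by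
    rw [sum_mul]
    refine sum_congr rfl fun p hp => ?_
    rw [HasAntidiagonal.mem_antidiagonal] at hp
    rw [show a + b + 2 * m = (a + 2 * p.1) + (b + 2 * p.2) by omega, pow_add]
    ring
  have hs := (summable_norm_sum_mul_antidiagonal_of_summable_norm hf hg).of_norm.hasSum
  rw [← tsum_mul_tsum_eq_tsum_sum_antidiagonal_of_summable_norm hf hg, ← besselI_eq_tsum,
    ← besselI_eq_tsum] at hs
  simpa only [hterm] using hs

lemma two_mul_div_le_of_le {s a b : ℝ} (hs : 0 < s) (ha : s ≤ a) (hb : s ≤ b) :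
    2 * s / (a * b) ≤ (s + 1) * (1 / (a * (a + 1)) + 1 / (b * (b + 1))) := by
  have ha0 : 0 < a := hs.trans_le ha
  have hb0 : 0 < b := hs.trans_le hb
  have hsa : s / a ^ 2 ≤ (s + 1) / (a * (a + 1)) := by
    rw [div_le_div_iff₀ (by positivity) (by positivity)]; nlinarith
  have hsb : s / b ^ 2 ≤ (s + 1) / (b * (b + 1)) := by
    rw [div_le_div_iff₀ (by positivity) (by positivity)]; nlinarith
  have amgm : 2 * s / (a * b) ≤ s / a ^ 2 + s / b ^ 2 := by
    rw [div_add_div _ _ (by positivity) (by positivity),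
      div_le_div_iff₀ (by positivity) (by positivity)]
    nlinarith [mul_nonneg (mul_nonneg hs.le (mul_pos ha0 hb0).le) (sq_nonneg (a - b))]
  calc 2 * s / (a * b) ≤ s / a ^ 2 + s / b ^ 2 := amgm
    _ ≤ (s + 1) / (a * (a + 1)) + (s + 1) / (b * (b + 1)) := add_le_add hsa hsb
    _ = _ := by ring

lemma besselCoeff_turan_term (n k j : ℕ) :
    2 * (n + 1) * (besselCoeff (n + 1) k * besselCoeff (n + 1) j) ≤
      (n + 2) * (besselCoeff n k * besselCoeff (n + 2) j +
        besselCoeff n j * besselCoeff (n + 2) k) := by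
  have hk := besselCoeff_pos n k
  have hj := besselCoeff_pos n j
  have hineq := two_mul_div_le_of_le (s := n + 1) (a := n + k + 1) (b := n + j + 1)
    (by positivity) (by simp) (by simp)
  have lhs : 2 * (n + 1) * (besselCoeff (n + 1) k * besselCoeff (n + 1) j) =
      besselCoeff n k * besselCoeff n j * (2 * (n + 1) / ((n + k + 1) * (n + j + 1))) := by
    rw [besselCoeff_succ, besselCoeff_succ]
    field_simp
  have rhs : (n + 2) * (besselCoeff n k * besselCoeff (n + 2) j +
        besselCoeff n j * besselCoeff (n + 2) k) =
      besselCoeff n k * besselCoeff n j * ((n + 1 + 1) *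
        (1 / ((n + k + 1) * (n + k + 1 + 1)) + 1 / ((n + j + 1) * (n + j + 1 + 1)))) := by
    simp only [besselCoeff_succ]
    push_cast
    field_simp
    ring
  rw [lhs, rhs]
  exact mul_le_mul_of_nonneg_left hineq (mul_pos hk hj).le

lemma besselCoeff_turan (n m : ℕ) :
    (n + 1) * ∑ p ∈ antidiagonal m, besselCoeff (n + 1) p.1 * besselCoeff (n + 1) p.2 ≤
      (n + 2) * ∑ p ∈ antidiagonal m, besselCoeff n p.1 * besselCoeff (n + 2) p.2 := by
  have hswap := Nat.sum_antidiagonal_swap (n := m)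
    (f := fun p ↦ besselCoeff n p.1 * besselCoeff (n + 2) p.2)
  have hterm := sum_le_sum fun p (_ : p ∈ antidiagonal m) =>
    besselCoeff_turan_term n p.1 p.2
  rw [← mul_sum, ← mul_sum, sum_add_distrib] at hterm
  simp only [Prod.fst_swap, Prod.snd_swap] at hswap
  rw [hswap] at hterm
  linarith

theorem besselI_turan (n : ℕ) (r : ℝ) :
    (n + 1) * besselI (n + 1) r ^ 2 ≤ (n + 2) * (besselI n r * besselI (n + 2) r) := by
  refine hasSum_le (fun m => ?_) ((hasSum_besselI_mul_besselI _ _ r).mul_left _)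
    ((hasSum_besselI_mul_besselI _ _ r).mul_left _) |>.trans_eq' (by rw [sq])
  rw [show n + 1 + (n + 1) + 2 * m = n + (n + 2) + 2 * m by omega, ← mul_assoc, ← mul_assoc]
  exact mul_le_mul_of_nonneg_right (besselCoeff_turan n m)
    (Even.pow_nonneg ⟨n + 1 + m, by omega⟩ _)

lemma P_pos (n : ℕ) {r : ℝ} (hr : 0 < r) : 0 < P n r := by
  have := besselI_pos n hr
  have := besselI_pos (n + 1) hr
  unfold P; positivity

lemma mul_P_le_mul_P_succ (n : ℕ) {r : ℝ} (hr : 0 < r) :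
    (n + 1) * P n r ≤ (n + 2) * P (n + 1) r := by
  have hI₀ := besselI_pos n hr
  have hI₁ := besselI_pos (n + 1) hr
  unfold P
  rw [← mul_div_assoc, ← mul_div_assoc, div_le_div_iff₀ (by positivity) (by positivity)]
  linarith [mul_le_mul_of_nonneg_left (besselI_turan n r) hr.le]

theorem P_combination_pos_general (n : ℕ) (S₁ S₂ : ℝ) (hS₁ : 0 < S₁)
    (h0 : S₁ / (2 * (n : ℝ) + 4) - S₂ / (2 * (n : ℝ) + 2) > 0) :
    ∀ r : ℝ, 0 < r → S₁ * P (n + 1) r - S₂ * P n r > 0 := by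
  intro r hr
  have hS : S₂ * (n + 2) < S₁ * (n + 1) := by
    rw [gt_iff_lt, sub_pos, div_lt_div_iff₀ (by positivity) (by positivity)] at h0
    linarith
  have hn : (0 : ℝ) < n + 2 := by positivity
  suffices (n + 2) * (S₂ * P n r) < (n + 2) * (S₁ * P (n + 1) r) by
    linarith [lt_of_mul_lt_mul_left this hn.le]
  calc (n + 2) * (S₂ * P n r) = S₂ * (n + 2) * P n r := by ring
    _ < S₁ * (n + 1) * P n r := mul_lt_mul_of_pos_right hS (P_pos n hr)
    _ = S₁ * ((n + 1) * P n r) := by ring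
    _ ≤ S₁ * ((n + 2) * P (n + 1) r) :=
        mul_le_mul_of_nonneg_left (mul_P_le_mul_P_succ n hr) hS₁.le
    _ = (n + 2) * (S₁ * P (n + 1) r) := by ring

theorem P_combination_pos (n : ℕ) (S₁ S₂ : ℝ) (hS₁ : 0 < S₁) (hS₂ : 0 < S₂)
    (h0 : S₁ / (2 * (n : ℝ) + 4) - S₂ / (2 * (n : ℝ) + 2) > 0) :
    ∀ r : ℝ, 0 < r → S₁ * P (n + 1) r - S₂ * P n r > 0 :=
  P_combination_pos_general n S₁ S₂ hS₁ h0
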